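/- Let R(θ) ∈ SO(10) be the block diagonal rotation with 2×2 rotation blocks of angles θ₁,...,θ₅ and let R̂(θ) ∈ Spin(10) ⊂ Cl(10) be a lift of R(θ). Then for the element π = e₀ ∧ ξ (realized in Cl(1,10) as Γ₀Γ₁Γ₃Γ₅Γ₇Γ₉ with ξ = e₁∧e₃∧e₅∧e₇∧e₉), one has π · R̂(θ)⁻¹ = R̂(θ) · π, and consequently the system (π·ε = ε, (R̂(θ)πR̂(θ)⁻¹)·ε = ε) is equivalent to (π·ε = ε, R̂(θ)²·ε = ε). -/
import Mathlib


open CliffordAlgebra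

/-- The quadratic form of signature `(1,10)` on `ℝ¹¹` (mostly-plus):
`Q(x) = -x₀² + x₁² + ⋯ + x_♮²`; the index `♮` is `10`. -/
noncomputable def Q110 : QuadraticForm ℝ (Fin 11 → ℝ) :=
  QuadraticMap.weightedSumSquares ℝ (fun i : Fin 11 => if i = 0 then (-1 : ℝ) else 1)

/-- The generators `Γ_M` of the Clifford algebra `Cl(1,10)`. -/
noncomputable def Γ (M : Fin 11) : CliffordAlgebra Q110 :=
  ι Q110 (Pi.single M 1)

/-- The element `π = e₀ ∧ ξ` realized in `Cl(1,10)` as `Γ₀Γ₁Γ₃Γ₅Γ₇Γ₉`,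
for `ξ = e₁∧e₃∧e₅∧e₇∧e₉`. -/
noncomputable def πElt : CliffordAlgebra Q110 :=
  Γ 0 * Γ 1 * Γ 3 * Γ 5 * Γ 7 * Γ 9

/-- The lift `R̂(θ) = ∏ᵢ (cos(θᵢ/2) - sin(θᵢ/2) Γ_{2i-1}Γ_{2i})` of the
block-diagonal rotation `R(θ) ∈ SO(10)` to `Spin(10) ⊂ Cl(10) ⊂ Cl(1,10)`. -/
noncomputable def Rhat (θ : Fin 5 → ℝ) : CliffordAlgebra Q110 :=
  (Real.cos (θ 0 / 2) • 1 - Real.sin (θ 0 / 2) • (Γ 1 * Γ 2)) *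
  (Real.cos (θ 1 / 2) • 1 - Real.sin (θ 1 / 2) • (Γ 3 * Γ 4)) *
  (Real.cos (θ 2 / 2) • 1 - Real.sin (θ 2 / 2) • (Γ 5 * Γ 6)) *
  (Real.cos (θ 3 / 2) • 1 - Real.sin (θ 3 / 2) • (Γ 7 * Γ 8)) *
  (Real.cos (θ 4 / 2) • 1 - Real.sin (θ 4 / 2) • (Γ 9 * Γ 10))

/-- The inverse lift `R̂(θ)⁻¹`. -/
noncomputable def RhatInv (θ : Fin 5 → ℝ) : CliffordAlgebra Q110 :=
  (Real.cos (θ 4 / 2) • 1 + Real.sin (θ 4 / 2) • (Γ 9 * Γ 10)) *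
  (Real.cos (θ 3 / 2) • 1 + Real.sin (θ 3 / 2) • (Γ 7 * Γ 8)) *
  (Real.cos (θ 2 / 2) • 1 + Real.sin (θ 2 / 2) • (Γ 5 * Γ 6)) *
  (Real.cos (θ 1 / 2) • 1 + Real.sin (θ 1 / 2) • (Γ 3 * Γ 4)) *
  (Real.cos (θ 0 / 2) • 1 + Real.sin (θ 0 / 2) • (Γ 1 * Γ 2))

/-! ### Generic ring lemmas -/

section Generic
set_option linter.unusedSectionVars false
variable {A : Type*} [Ring A] [Algebra ℝ A]

lemma aux_sq_biv (a b : A) (ha : a*a = 1) (hb : b*b = 1) (hab : a*b = -(b*a)) :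
    (a*b)*(a*b) = -1 := by
  have h' : b*a = -(a*b) := by rw [hab, neg_neg]
  calc (a*b)*(a*b) = a*(b*a)*b := by simp only [mul_assoc]
  _ = -(a*a*(b*b)) := by rw [h']; simp only [mul_neg, neg_mul, mul_assoc]
  _ = -1 := by rw [ha, hb, one_mul]

lemma aux_comm_of_anticomm (x a b : A) (hxa : x*a = -(a*x)) (hxb : x*b = -(b*x)) :
    x*(a*b) = (a*b)*x := by
  calc x*(a*b) = (x*a)*b := (mul_assoc _ _ _).symm
  _ = -(a*(x*b)) := by rw [hxa]; simp only [neg_mul, mul_assoc]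
  _ = a*(b*x) := by rw [hxb, mul_neg, neg_neg]
  _ = (a*b)*x := (mul_assoc _ _ _).symm

lemma aux_anti_self_left (a b : A) (ha : a*a = 1) (hab : a*b = -(b*a)) :
    a*(a*b) = -((a*b)*a) := by
  have h' : b*a = -(a*b) := by rw [hab, neg_neg]
  calc a*(a*b) = b := by rw [← mul_assoc, ha, one_mul]
  _ = -((a*b)*a) := by rw [mul_assoc, h', mul_neg, ← mul_assoc, ha, one_mul, neg_neg]

lemma aux_pass_comm (p x B : A) (hp : p*B = -(B*p)) (hx : x*B = B*x) :
    (p*x)*B = -(B*(p*x)) := by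
  rw [mul_assoc, hx, ← mul_assoc, hp]; simp only [neg_mul, mul_assoc]

lemma aux_pass_anti (p x B : A) (hp : p*B = B*p) (hx : x*B = -(B*x)) :
    (p*x)*B = -(B*(p*x)) := by
  rw [mul_assoc, hx, mul_neg, ← mul_assoc, hp]; simp only [mul_neg, mul_assoc]

lemma aux_pass_cc (p x B : A) (hp : p*B = B*p) (hx : x*B = B*x) :
    (p*x)*B = B*(p*x) := by
  rw [mul_assoc, hx, ← mul_assoc, hp, mul_assoc]

lemma aux_factor_inv (c s : ℝ) (h : c^2 + s^2 = 1) (B : A) (hB : B*B = -1) :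
    (c•(1:A) - s•B)*(c•1 + s•B) = 1 := by
  calc (c•(1:A) - s•B)*(c•1 + s•B) = (c^2+s^2)•(1:A) := by
        simp only [sub_mul, mul_add, smul_mul_assoc, mul_smul_comm, smul_smul, hB,
          mul_one, one_mul, smul_neg]
        module
  _ = 1 := by rw [h, one_smul]

lemma aux_factor_inv' (c s : ℝ) (h : c^2 + s^2 = 1) (B : A) (hB : B*B = -1) :
    (c•(1:A) + s•B)*(c•1 - s•B) = 1 := by
  calc (c•(1:A) + s•B)*(c•1 - s•B) = (c^2+s^2)•(1:A) := by
        simp only [add_mul, mul_sub, smul_mul_assoc, mul_smul_comm, smul_smul, hB,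
          mul_one, one_mul, smul_neg]
        module
  _ = 1 := by rw [h, one_smul]

lemma aux_conj_fact (c s : ℝ) (p B : A) (h : p*B = -(B*p)) :
    p*(c•1 + s•B) = (c•1 - s•B)*p := by
  simp only [mul_add, sub_mul, mul_smul_comm, smul_mul_assoc, h, smul_neg, mul_one, one_mul,
    sub_eq_add_neg, add_mul, neg_mul]

lemma aux_comm_fact (c s c' s' : ℝ) (B B' : A) (h : B*B' = B'*B) :
    (c•(1:A) - s•B)*(c'•1 - s'•B') = (c'•1-s'•B')*(c•1-s•B) := by
  simp only [sub_mul, mul_sub, mul_smul_comm, smul_mul_assoc, smul_smul, h, mul_one, one_mul]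
  module

lemma aux_cancel5 (a b c d e a' b' c' d' e' : A)
    (h1 : e*e' = 1) (h2 : d*d' = 1) (h3 : c*c' = 1) (h4 : b*b' = 1) (h5 : a*a' = 1) :
    (a*b*c*d*e)*(e'*d'*c'*b'*a') = 1 := by
  simp only [mul_assoc]
  rw [← mul_assoc e e', h1, one_mul, ← mul_assoc d d', h2, one_mul,
    ← mul_assoc c c', h3, one_mul, ← mul_assoc b b', h4, one_mul, h5]

lemma aux_rev5 (a b c d e : A) (hab : Commute a b) (hac : Commute a c) (had : Commute a d)
    (hae : Commute a e) (hbc : Commute b c) (hbd : Commute b d) (hbe : Commute b e)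
    (hcd : Commute c d) (hce : Commute c e) (hde : Commute d e) :
    a*b*c*d*e = e*(d*(c*(b*a))) := by
  rw [(((hae.mul_left hbe).mul_left hce).mul_left hde).eq,
    ((had.mul_left hbd).mul_left hcd).eq, (hac.mul_left hbc).eq, hab.eq]

end Generic

/-! ### Basic facts about the generators -/

lemma Q110_single (M : Fin 11) : Q110 (Pi.single M 1) = if M = 0 then (-1:ℝ) else 1 := by
  rw [Q110, QuadraticMap.weightedSumSquares_apply]
  rw [Finset.sum_eq_single M]
  · simp
  · intro i _ hi; simp [Pi.single_apply, hi]
  · simp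

lemma Γ_sq (M : Fin 11) (h : M ≠ 0) : Γ M * Γ M = 1 := by
  rw [Γ, ι_sq_scalar, Q110_single, if_neg h, map_one]

lemma Γ_anticomm {M N : Fin 11} (h : M ≠ N) : Γ M * Γ N = -(Γ N * Γ M) := by
  refine ι_mul_ι_comm_of_isOrtho ?_
  rw [QuadraticMap.isOrtho_def, Q110, QuadraticMap.weightedSumSquares_apply,
    QuadraticMap.weightedSumSquares_apply, QuadraticMap.weightedSumSquares_apply,
    ← Finset.sum_add_distrib]
  refine Finset.sum_congr rfl fun i _ => ?_
  rcases eq_or_ne i M with rfl | hM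
  · simp [Pi.single_apply, h.symm]
  · rcases eq_or_ne i N with rfl | hN
    · simp [Pi.single_apply, hM]
    · simp [Pi.single_apply, hM, hN]

/-- A generator commutes with a bivector in a disjoint plane. -/
lemma Γ_comm_biv {M a b : Fin 11} (h1 : M ≠ a) (h2 : M ≠ b) :
    Γ M * (Γ a * Γ b) = (Γ a * Γ b) * Γ M :=
  aux_comm_of_anticomm _ _ _ (Γ_anticomm h1) (Γ_anticomm h2)

/-- A generator anticommutes with a bivector containing it. -/
lemma Γ_anti_biv {a b : Fin 11} (h0 : a ≠ 0) (h : a ≠ b) :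
    Γ a * (Γ a * Γ b) = -((Γ a * Γ b) * Γ a) :=
  aux_anti_self_left _ _ (Γ_sq a h0) (Γ_anticomm h)

/-- The square of a (spacelike) bivector is `-1`. -/
lemma biv_sq {a b : Fin 11} (ha : a ≠ 0) (hb : b ≠ 0) (hab : a ≠ b) :
    (Γ a * Γ b) * (Γ a * Γ b) = -1 :=
  aux_sq_biv _ _ (Γ_sq a ha) (Γ_sq b hb) (Γ_anticomm hab)

/-- Bivectors in disjoint planes commute. -/
lemma biv_comm {a b c d : Fin 11} (hac : a ≠ c) (had : a ≠ d) (hbc : b ≠ c) (hbd : b ≠ d) :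
    (Γ a * Γ b) * (Γ c * Γ d) = (Γ c * Γ d) * (Γ a * Γ b) :=
  aux_pass_cc _ _ _ (Γ_comm_biv hac had) (Γ_comm_biv hbc hbd)

/-! ### `π` anticommutes with each rotation bivector -/

lemma π_anti_B0 : πElt * (Γ 1 * Γ 2) = -((Γ 1 * Γ 2) * πElt) := by
  have s1 : (Γ 0 * Γ 1) * (Γ 1 * Γ 2) = -((Γ 1 * Γ 2) * (Γ 0 * Γ 1)) :=
    aux_pass_anti _ _ _ (Γ_comm_biv (by decide) (by decide)) (Γ_anti_biv (by decide) (by decide))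
  have s2 := aux_pass_comm _ _ _ s1 (Γ_comm_biv (M := 3) (by decide) (by decide))
  have s3 := aux_pass_comm _ _ _ s2 (Γ_comm_biv (M := 5) (by decide) (by decide))
  have s4 := aux_pass_comm _ _ _ s3 (Γ_comm_biv (M := 7) (by decide) (by decide))
  have s5 := aux_pass_comm _ _ _ s4 (Γ_comm_biv (M := 9) (by decide) (by decide))
  exact s5

lemma π_anti_B1 : πElt * (Γ 3 * Γ 4) = -((Γ 3 * Γ 4) * πElt) := by
  have s1 : (Γ 0 * Γ 1) * (Γ 3 * Γ 4) = (Γ 3 * Γ 4) * (Γ 0 * Γ 1) :=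
    aux_pass_cc _ _ _ (Γ_comm_biv (by decide) (by decide)) (Γ_comm_biv (by decide) (by decide))
  have s2 := aux_pass_anti _ _ _ s1 (Γ_anti_biv (a := 3) (by decide) (by decide))
  have s3 := aux_pass_comm _ _ _ s2 (Γ_comm_biv (M := 5) (by decide) (by decide))
  have s4 := aux_pass_comm _ _ _ s3 (Γ_comm_biv (M := 7) (by decide) (by decide))
  have s5 := aux_pass_comm _ _ _ s4 (Γ_comm_biv (M := 9) (by decide) (by decide))
  exact s5

lemma π_anti_B2 : πElt * (Γ 5 * Γ 6) = -((Γ 5 * Γ 6) * πElt) := by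
  have s1 : (Γ 0 * Γ 1) * (Γ 5 * Γ 6) = (Γ 5 * Γ 6) * (Γ 0 * Γ 1) :=
    aux_pass_cc _ _ _ (Γ_comm_biv (by decide) (by decide)) (Γ_comm_biv (by decide) (by decide))
  have s2 := aux_pass_cc _ _ _ s1 (Γ_comm_biv (M := 3) (by decide) (by decide))
  have s3 := aux_pass_anti _ _ _ s2 (Γ_anti_biv (a := 5) (by decide) (by decide))
  have s4 := aux_pass_comm _ _ _ s3 (Γ_comm_biv (M := 7) (by decide) (by decide))
  have s5 := aux_pass_comm _ _ _ s4 (Γ_comm_biv (M := 9) (by decide) (by decide))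
  exact s5

lemma π_anti_B3 : πElt * (Γ 7 * Γ 8) = -((Γ 7 * Γ 8) * πElt) := by
  have s1 : (Γ 0 * Γ 1) * (Γ 7 * Γ 8) = (Γ 7 * Γ 8) * (Γ 0 * Γ 1) :=
    aux_pass_cc _ _ _ (Γ_comm_biv (by decide) (by decide)) (Γ_comm_biv (by decide) (by decide))
  have s2 := aux_pass_cc _ _ _ s1 (Γ_comm_biv (M := 3) (by decide) (by decide))
  have s3 := aux_pass_cc _ _ _ s2 (Γ_comm_biv (M := 5) (by decide) (by decide))
  have s4 := aux_pass_anti _ _ _ s3 (Γ_anti_biv (a := 7) (by decide) (by decide))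
  have s5 := aux_pass_comm _ _ _ s4 (Γ_comm_biv (M := 9) (by decide) (by decide))
  exact s5

lemma π_anti_B4 : πElt * (Γ 9 * Γ 10) = -((Γ 9 * Γ 10) * πElt) := by
  have s1 : (Γ 0 * Γ 1) * (Γ 9 * Γ 10) = (Γ 9 * Γ 10) * (Γ 0 * Γ 1) :=
    aux_pass_cc _ _ _ (Γ_comm_biv (by decide) (by decide)) (Γ_comm_biv (by decide) (by decide))
  have s2 := aux_pass_cc _ _ _ s1 (Γ_comm_biv (M := 3) (by decide) (by decide))
  have s3 := aux_pass_cc _ _ _ s2 (Γ_comm_biv (M := 5) (by decide) (by decide))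
  have s4 := aux_pass_cc _ _ _ s3 (Γ_comm_biv (M := 7) (by decide) (by decide))
  have s5 := aux_pass_anti _ _ _ s4 (Γ_anti_biv (a := 9) (by decide) (by decide))
  exact s5

/-! ### The main identities -/

lemma Rhat_mul_RhatInv (θ : Fin 5 → ℝ) : Rhat θ * RhatInv θ = 1 := by
  unfold Rhat RhatInv
  exact aux_cancel5 _ _ _ _ _ _ _ _ _ _
    (aux_factor_inv _ _ (Real.cos_sq_add_sin_sq _) _ (biv_sq (by decide) (by decide) (by decide)))
    (aux_factor_inv _ _ (Real.cos_sq_add_sin_sq _) _ (biv_sq (by decide) (by decide) (by decide)))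
    (aux_factor_inv _ _ (Real.cos_sq_add_sin_sq _) _ (biv_sq (by decide) (by decide) (by decide)))
    (aux_factor_inv _ _ (Real.cos_sq_add_sin_sq _) _ (biv_sq (by decide) (by decide) (by decide)))
    (aux_factor_inv _ _ (Real.cos_sq_add_sin_sq _) _ (biv_sq (by decide) (by decide) (by decide)))

lemma RhatInv_mul_Rhat (θ : Fin 5 → ℝ) : RhatInv θ * Rhat θ = 1 := by
  unfold Rhat RhatInv
  exact aux_cancel5 _ _ _ _ _ _ _ _ _ _
    (aux_factor_inv' _ _ (Real.cos_sq_add_sin_sq _) _ (biv_sq (by decide) (by decide) (by decide)))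
    (aux_factor_inv' _ _ (Real.cos_sq_add_sin_sq _) _ (biv_sq (by decide) (by decide) (by decide)))
    (aux_factor_inv' _ _ (Real.cos_sq_add_sin_sq _) _ (biv_sq (by decide) (by decide) (by decide)))
    (aux_factor_inv' _ _ (Real.cos_sq_add_sin_sq _) _ (biv_sq (by decide) (by decide) (by decide)))
    (aux_factor_inv' _ _ (Real.cos_sq_add_sin_sq _) _ (biv_sq (by decide) (by decide) (by decide)))

lemma pi_mul_RhatInv (θ : Fin 5 → ℝ) : πElt * RhatInv θ = Rhat θ * πElt := by
  unfold Rhat RhatInv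
  have c0 : SemiconjBy πElt
      (Real.cos (θ 0 / 2) • 1 + Real.sin (θ 0 / 2) • (Γ 1 * Γ 2))
      (Real.cos (θ 0 / 2) • 1 - Real.sin (θ 0 / 2) • (Γ 1 * Γ 2)) :=
    aux_conj_fact _ _ _ _ π_anti_B0
  have c1 : SemiconjBy πElt
      (Real.cos (θ 1 / 2) • 1 + Real.sin (θ 1 / 2) • (Γ 3 * Γ 4))
      (Real.cos (θ 1 / 2) • 1 - Real.sin (θ 1 / 2) • (Γ 3 * Γ 4)) :=
    aux_conj_fact _ _ _ _ π_anti_B1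
  have c2 : SemiconjBy πElt
      (Real.cos (θ 2 / 2) • 1 + Real.sin (θ 2 / 2) • (Γ 5 * Γ 6))
      (Real.cos (θ 2 / 2) • 1 - Real.sin (θ 2 / 2) • (Γ 5 * Γ 6)) :=
    aux_conj_fact _ _ _ _ π_anti_B2
  have c3 : SemiconjBy πElt
      (Real.cos (θ 3 / 2) • 1 + Real.sin (θ 3 / 2) • (Γ 7 * Γ 8))
      (Real.cos (θ 3 / 2) • 1 - Real.sin (θ 3 / 2) • (Γ 7 * Γ 8)) :=
    aux_conj_fact _ _ _ _ π_anti_B3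
  have c4 : SemiconjBy πElt
      (Real.cos (θ 4 / 2) • 1 + Real.sin (θ 4 / 2) • (Γ 9 * Γ 10))
      (Real.cos (θ 4 / 2) • 1 - Real.sin (θ 4 / 2) • (Γ 9 * Γ 10)) :=
    aux_conj_fact _ _ _ _ π_anti_B4
  have big := (((c4.mul_right c3).mul_right c2).mul_right c1).mul_right c0
  rw [big.eq]
  congr 1
  refine (aux_rev5 _ _ _ _ _ ?_ ?_ ?_ ?_ ?_ ?_ ?_ ?_ ?_ ?_).trans (by simp only [mul_assoc]) <;>
    exact (commute_iff_eq _ _).mpr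
      (aux_comm_fact _ _ _ _ _ _ (biv_comm (by decide) (by decide) (by decide) (by decide)))

/-- For `π = e₀ ∧ ξ` realized as `Γ₀Γ₁Γ₃Γ₅Γ₇Γ₉`, one has
`π R̂(θ)⁻¹ = R̂(θ) π`, and consequently, on any `Cl(1,10)`-module `Δ`, the
system `π ε = ε`, `(R̂(θ) π R̂(θ)⁻¹) ε = ε` is equivalent to the system
`π ε = ε`, `R̂(θ)² ε = ε`. -/
theorem pi_intertwines_rhat (Δ : Type*) [AddCommGroup Δ]
    [Module (CliffordAlgebra Q110) Δ] (θ : Fin 5 → ℝ) :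
    Rhat θ * RhatInv θ = 1 ∧ RhatInv θ * Rhat θ = 1 ∧
    πElt * RhatInv θ = Rhat θ * πElt ∧
    ∀ ε : Δ,
      (πElt • ε = ε ∧ (Rhat θ * πElt * RhatInv θ) • ε = ε) ↔
      (πElt • ε = ε ∧ (Rhat θ * Rhat θ) • ε = ε) := by
  have key : Rhat θ * πElt * RhatInv θ = Rhat θ * Rhat θ * πElt := by
    rw [mul_assoc, pi_mul_RhatInv θ, ← mul_assoc]
  refine ⟨Rhat_mul_RhatInv θ, RhatInv_mul_Rhat θ, pi_mul_RhatInv θ, fun ε => ?_⟩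
  constructor
  · rintro ⟨h1, h2⟩
    rw [key, mul_smul, h1] at h2
    exact ⟨h1, h2⟩
  · rintro ⟨h1, h2⟩
    refine ⟨h1, ?_⟩
    rw [key, mul_smul, h1, h2]
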